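/- Let p be a holomorphic polynomial, let a, b ∈ ℂ, and let n be a nonnegative integer. Then (1/π)·∫_ℂ p(w)·conj(w)^n·e^{a·w + b·conj(w) − |w|^2} dA(w) equals the n-th derivative of the entire function u ↦ e^{a·u}·p(u), evaluated at u = b. -/

import Mathlib

/-!
Write `F p n w = p(w) w̄ⁿ e^{aw + b w̄ - |w|²}` and `M p n = ∫ F p n`. The Wirtinger derivatives
of `F p n` are `F (a p + p') n - F p (n + 1)` (in `w`) and `n F p (n - 1) + F ((b - X) p) n`
(in `w̄`); both integrate to zero since `F` has Gaussian decay. The first identity gives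
`M p (n + 1) = M (a p + p') n`, the same recursion as for the right-hand side, because
`(e^{au} p(u))' = e^{au} (a p + p')(u)`. The second, at `n = 0`, kills `M ((X - b) q) 0`, so
`M p 0 = p(b) M 1 0 = π e^{ab} p(b)` by the Gaussian integral.
-/

open Complex MeasureTheory Polynomial
open scoped ComplexConjugate Real

theorem pow_mul_exp_sub_sq_le (k : ℕ) (c : ℝ) {r : ℝ} (hr : 0 ≤ r) :
    r ^ k * Real.exp (c * r - r ^ 2) ≤
      k.factorial * Real.exp ((c + 1) ^ 2 / 2) * Real.exp (-(1 / 2) * r ^ 2) := by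
  have hpow : r ^ k ≤ k.factorial * Real.exp r := by
    have := Real.pow_div_factorial_le_exp r hr k
    rwa [div_le_iff₀ (by positivity), mul_comm] at this
  calc r ^ k * Real.exp (c * r - r ^ 2)
      ≤ k.factorial * Real.exp r * Real.exp (c * r - r ^ 2) := by gcongr
    _ = k.factorial * Real.exp ((c + 1) * r - r ^ 2 / 2) * Real.exp (-(1 / 2) * r ^ 2) := by
      rw [mul_assoc, mul_assoc, ← Real.exp_add, ← Real.exp_add]
      ring_nf
    _ ≤ k.factorial * Real.exp ((c + 1) ^ 2 / 2) * Real.exp (-(1 / 2) * r ^ 2) := by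
      gcongr
      nlinarith [sq_nonneg (c + 1 - r)]

theorem integrable_norm_pow_mul_exp_sub_sq (k : ℕ) (c : ℝ) :
    Integrable (fun w : ℂ => ‖w‖ ^ k * Real.exp (c * ‖w‖ - ‖w‖ ^ 2)) := by
  have hgauss : Integrable (fun w : ℂ => Real.exp (-(1 / 2) * ‖w‖ ^ 2)) := by
    simpa [norm_exp, ← ofReal_pow] using
      (GaussianFourier.integrable_cexp_neg_mul_sq_norm_add (V := ℂ) (b := 1 / 2)
        (by norm_num) 0 0).norm
  refine (hgauss.const_mul (k.factorial * Real.exp ((c + 1) ^ 2 / 2))).mono' (by fun_prop)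
    (Filter.Eventually.of_forall fun w => ?_)
  rw [Real.norm_of_nonneg (by positivity)]
  exact pow_mul_exp_sub_sq_le k c (norm_nonneg w)

theorem integral_eq_zero_of_hasLineDerivAt {E F : Type*} [NormedAddCommGroup E]
    [NormedSpace ℝ E] [FiniteDimensional ℝ E] [MeasurableSpace E] [BorelSpace E]
    {μ : Measure E} [μ.IsAddHaarMeasure] [NormedAddCommGroup F] [NormedSpace ℝ F]
    {f f' : E → F} {v : E} (hf : Integrable f μ) (hf' : Integrable f' μ)
    (hderiv : ∀ x, HasLineDerivAt ℝ f (f' x) x v) :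
    ∫ x, f' x ∂μ = 0 := by
  have hone (x : E) : HasLineDerivAt ℝ (fun _ => (1 : ℝ)) 0 x v := by
    simpa using (hasFDerivAt_const (1 : ℝ) x).hasLineDerivAt v
  simpa using integral_bilinear_hasLineDerivAt_right_eq_neg_left_of_integrable
    (B := ContinuousLinearMap.lsmul ℝ ℝ) (μ := μ) (by simp) (by simpa using hf')
    (by simpa using hf) (fun x _ => hone x) (fun x _ => hderiv x)

theorem integral_eq_zero_of_hasLineDerivAt_wirtinger {f A B : ℂ → ℂ} (hf : Integrable f)
    (hA : Integrable A) (hB : Integrable B)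
    (hderiv : ∀ w v, HasLineDerivAt ℝ f (v * A w + conj v * B w) w v) :
    ∫ w, A w = 0 ∧ ∫ w, B w = 0 := by
  have hdir (v : ℂ) : (v * ∫ w, A w) + conj v * ∫ w, B w = 0 := by
    rw [← integral_const_mul, ← integral_const_mul,
      ← integral_add (hA.const_mul v) (hB.const_mul _)]
    exact integral_eq_zero_of_hasLineDerivAt hf ((hA.const_mul v).add (hB.const_mul _))
      (fun w => hderiv w v)
  have h1 := hdir 1
  have hI := hdir I
  simp only [map_one, one_mul, conj_I] at h1 hI
  constructor
  · linear_combination (1 / 2 : ℂ) * h1 - (I / 2) * hI + ((∫ w, A w) - ∫ w, B w) / 2 * I_sq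
  · linear_combination (1 / 2 : ℂ) * h1 + (I / 2) * hI - ((∫ w, A w) - ∫ w, B w) / 2 * I_sq

section Fock

variable (a b : ℂ)

noncomputable def fockIntegrand (p : ℂ[X]) (n : ℕ) (w : ℂ) : ℂ :=
  p.eval w * conj w ^ n * cexp (a * w + b * conj w - w * conj w)

noncomputable def fockMoment (p : ℂ[X]) (n : ℕ) : ℂ :=
  ∫ w, fockIntegrand a b p n w

theorem continuous_fockIntegrand (p : ℂ[X]) (n : ℕ) : Continuous (fockIntegrand a b p n) := by
  unfold fockIntegrand
  fun_prop

theorem fockIntegrand_add (p q : ℂ[X]) (n : ℕ) :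
    fockIntegrand a b (p + q) n = fockIntegrand a b p n + fockIntegrand a b q n := by
  ext w
  simp only [fockIntegrand, eval_add, Pi.add_apply]
  ring

theorem fockIntegrand_C_mul (c : ℂ) (p : ℂ[X]) (n : ℕ) (w : ℂ) :
    fockIntegrand a b (C c * p) n w = c * fockIntegrand a b p n w := by
  simp only [fockIntegrand, eval_mul, eval_C]
  ring

theorem norm_fockIntegrand_monomial_le (c : ℂ) (k n : ℕ) (w : ℂ) :
    ‖fockIntegrand a b (monomial k c) n w‖ ≤
      ‖c‖ * (‖w‖ ^ (k + n) * Real.exp ((‖a‖ + ‖b‖) * ‖w‖ - ‖w‖ ^ 2)) := by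
  have hre : (a * w + b * conj w - w * conj w).re ≤ (‖a‖ + ‖b‖) * ‖w‖ - ‖w‖ ^ 2 := by
    have ha := (re_le_norm (a * w)).trans_eq (norm_mul a w)
    have hb := (re_le_norm (b * conj w)).trans_eq (by rw [norm_mul, norm_conj])
    rw [sub_re, add_re, mul_conj', ← ofReal_pow, ofReal_re]
    linarith
  simp only [fockIntegrand, eval_monomial, norm_mul, norm_pow, norm_conj, norm_exp, pow_add]
  rw [mul_assoc, mul_assoc, mul_assoc]
  gcongr

theorem integrable_fockIntegrand (p : ℂ[X]) (n : ℕ) : Integrable (fockIntegrand a b p n) := by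
  induction p using Polynomial.induction_on' with
  | add p q hp hq => simpa only [fockIntegrand_add] using hp.add hq
  | monomial k c =>
    exact ((integrable_norm_pow_mul_exp_sub_sq (k + n) (‖a‖ + ‖b‖)).const_mul ‖c‖).mono'
      (continuous_fockIntegrand a b _ n).aestronglyMeasurable
      (Filter.Eventually.of_forall (norm_fockIntegrand_monomial_le a b c k n))

theorem hasLineDerivAt_fockIntegrand (p : ℂ[X]) (n : ℕ) (w v : ℂ) :
    HasLineDerivAt ℝ (fockIntegrand a b p n)
      (v * (fockIntegrand a b (C a * p + derivative p) n w - fockIntegrand a b p (n + 1) w) +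
        conj v * (n * fockIntegrand a b p (n - 1) w + fockIntegrand a b ((C b - X) * p) n w))
      w v := by
  have hγ : HasDerivAt (fun t : ℝ => w + t • v) v 0 := by
    simpa using ((hasDerivAt_id (0 : ℝ)).smul_const v).const_add w
  have hγc : HasDerivAt (fun t : ℝ => conj (w + t • v)) (conj v) 0 := hγ.star
  have hp : HasDerivAt (fun t : ℝ => p.eval (w + t • v)) ((derivative p).eval w * v) 0 := by
    have := (p.hasDerivAt (w + (0 : ℝ) • v)).comp (0 : ℝ) hγ
    rwa [zero_smul, add_zero] at this
  have hexp := (((hγ.const_mul a).fun_add (hγc.const_mul b)).fun_sub (hγ.fun_mul hγc)).cexp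
  have h := (hp.fun_mul (hγc.fun_pow n)).fun_mul hexp
  rw [zero_smul, add_zero] at h
  unfold HasLineDerivAt fockIntegrand
  refine h.congr_deriv ?_
  simp only [eval_add, eval_mul, eval_C, eval_sub, eval_X]
  ring

theorem fockMoment_add (p q : ℂ[X]) (n : ℕ) :
    fockMoment a b (p + q) n = fockMoment a b p n + fockMoment a b q n := by
  rw [fockMoment, fockIntegrand_add,
    integral_add' (integrable_fockIntegrand a b p n) (integrable_fockIntegrand a b q n)]
  rfl

theorem fockMoment_C_mul (c : ℂ) (p : ℂ[X]) (n : ℕ) :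
    fockMoment a b (C c * p) n = c * fockMoment a b p n := by
  simp_rw [fockMoment, fockIntegrand_C_mul, integral_const_mul]

theorem fockMoment_succ (p : ℂ[X]) (n : ℕ) :
    fockMoment a b p (n + 1) = fockMoment a b (C a * p + derivative p) n := by
  have h := (integral_eq_zero_of_hasLineDerivAt_wirtinger (integrable_fockIntegrand a b p n)
    ((integrable_fockIntegrand a b _ n).sub (integrable_fockIntegrand a b p (n + 1)))
    (((integrable_fockIntegrand a b p (n - 1)).const_mul _).add
      (integrable_fockIntegrand a b _ n))
    (hasLineDerivAt_fockIntegrand a b p n)).1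
  rw [integral_sub' (integrable_fockIntegrand a b _ n) (integrable_fockIntegrand a b p (n + 1)),
    sub_eq_zero] at h
  exact h.symm

theorem fockMoment_C_sub_X_mul_zero (p : ℂ[X]) : fockMoment a b ((C b - X) * p) 0 = 0 := by
  have h := (integral_eq_zero_of_hasLineDerivAt_wirtinger (integrable_fockIntegrand a b p 0)
    ((integrable_fockIntegrand a b _ 0).sub (integrable_fockIntegrand a b p 1))
    (((integrable_fockIntegrand a b p (0 - 1)).const_mul _).add
      (integrable_fockIntegrand a b _ 0))
    (hasLineDerivAt_fockIntegrand a b p 0)).2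
  simpa [fockMoment] using h

theorem fockMoment_one_zero : fockMoment a b 1 0 = π * cexp (a * b) := by
  let c : Fin 2 → ℂ := ![a + b, (a - b) * I]
  calc fockMoment a b 1 0
      = ∫ v : Fin 2 → ℝ, cexp (-1 * ∑ i, (v i : ℂ) ^ 2 + ∑ i, c i * v i) := by
        rw [fockMoment, ← volume_preserving_equiv_pi.symm.integral_comp']
        congr 1 with v
        simp only [fockIntegrand, measurableEquivPi_symm_apply, eval_one, pow_zero, one_mul,
          map_add, map_mul, conj_ofReal, conj_I, Fin.sum_univ_two, c, Matrix.cons_val_zero,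
          Matrix.cons_val_one]
        congr 1
        linear_combination (v 1 : ℂ) ^ 2 * I_sq
    _ = (π / 1) ^ (Fintype.card (Fin 2) / 2 : ℂ) * cexp ((∑ i, c i ^ 2) / (4 * 1)) :=
        GaussianFourier.integral_cexp_neg_mul_sum_add (by norm_num) c
    _ = π * cexp (a * b) := by
        norm_num [c, Fin.sum_univ_two]
        congr 1
        linear_combination (a - b) ^ 2 / 4 * I_sq

theorem fockMoment_zero (p : ℂ[X]) : fockMoment a b p 0 = π * cexp (a * b) * p.eval b := by
  obtain ⟨q, hq⟩ := X_sub_C_dvd_sub_C_eval (p := p) (a := b)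
  have hp : p = C (p.eval b) * 1 + (C b - X) * -q := by linear_combination hq
  conv_lhs => rw [hp]
  rw [fockMoment_add, fockMoment_C_mul, fockMoment_one_zero, fockMoment_C_sub_X_mul_zero]
  ring

theorem deriv_cexp_mul_eval (p : ℂ[X]) :
    deriv (fun u => cexp (a * u) * p.eval u) =
      fun u => cexp (a * u) * (C a * p + derivative p).eval u := by
  ext u
  have h := (((hasDerivAt_id' u).const_mul a).cexp).fun_mul (p.hasDerivAt u)
  rw [h.deriv, eval_add, eval_mul, eval_C]
  ring

theorem iteratedDeriv_succ_cexp_mul_eval (p : ℂ[X]) (n : ℕ) :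
    iteratedDeriv (n + 1) (fun u => cexp (a * u) * p.eval u) =
      iteratedDeriv n (fun u => cexp (a * u) * (C a * p + derivative p).eval u) := by
  rw [iteratedDeriv_succ', deriv_cexp_mul_eval]

theorem fockMoment_eq_pi_mul_iteratedDeriv (p : ℂ[X]) (n : ℕ) :
    fockMoment a b p n = π * iteratedDeriv n (fun u => cexp (a * u) * p.eval u) b := by
  induction n generalizing p with
  | zero => rw [fockMoment_zero, iteratedDeriv_zero, mul_assoc]
  | succ n ih => rw [fockMoment_succ, ih, iteratedDeriv_succ_cexp_mul_eval]

end Fock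

theorem stmt_10 (p : Polynomial ℂ) (a b : ℂ) (n : ℕ) :
    (Real.pi : ℂ)⁻¹ * ∫ w : ℂ, p.eval w * (conj w) ^ n *
        Complex.exp (a * w + b * conj w - (‖w‖ : ℂ) ^ 2) =
      iteratedDeriv n (fun u : ℂ => Complex.exp (a * u) * p.eval u) b := by
  have hπ : (π : ℂ) ≠ 0 := ofReal_ne_zero.mpr Real.pi_ne_zero
  simp_rw [← mul_conj']
  rw [inv_mul_eq_iff_eq_mul₀ hπ]
  exact fockMoment_eq_pi_mul_iteratedDeriv a b p n
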